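/- arXiv:1507.08926 — 7 statements merged into one kernel-verified Lean document; each statement's English description precedes it below -/
import Mathlib

section
/- Let t, r ≥ 2 and let S ⊆ G = (Z_t)^r ⋊ Z_r consist of the t elements (a,0,...,0;1) for a ∈ Z_t together with the r−2 elements (0,...,0;s) for 2 ≤ s ≤ r−1. Then the Cayley digraph of G with connection set S has diameter at most r+1; that is, every element of G is a product of at most r+1 elements of S. -/
/-- The cyclic right-shift by `s` on vectors in `(ZMod t)^r`
(indices in `ZMod r`; coordinate `j` of the paper is index `j-1`). -/
def shiftEquiv (t r : ℕ) (s : ZMod r) : (ZMod r → ZMod t) ≃+ (ZMod r → ZMod t) where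
  toFun v := fun i => v (i - s)
  invFun v := fun i => v (i + s)
  left_inv v := funext fun i => by simp
  right_inv v := funext fun i => by simp
  map_add' u v := rfl

/-- The action of `ZMod r` on `(ZMod t)^r` by cyclic right shifts. -/
def shiftHom (t r : ℕ) :
    Multiplicative (ZMod r) →* MulAut (Multiplicative (ZMod r → ZMod t)) where
  toFun s := AddEquiv.toMultiplicative (shiftEquiv t r (Multiplicative.toAdd s))
  map_one' := by
    ext v
    simp [shiftEquiv]
  map_mul' s s' := by
    ext v
    simp [shiftEquiv, sub_sub]

/-- The group `G = (Z_t)^r ⋊ Z_r` of the paper, with multiplication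
`(u,s)·(v,s') = (u + α^s(v), s+s')`. -/
abbrev DBGroup (t r : ℕ) : Type :=
  SemidirectProduct (Multiplicative (ZMod r → ZMod t)) (Multiplicative (ZMod r)) (shiftHom t r)

/-- The element `(v; s)` of `G`. -/
def DBGroup.mk' (t r : ℕ) (v : ZMod r → ZMod t) (s : ZMod r) : DBGroup t r :=
  ⟨Multiplicative.ofAdd v, Multiplicative.ofAdd s⟩

lemma mk'_mul (t r : ℕ) (u v : ZMod r → ZMod t) (s s' : ZMod r) :
    DBGroup.mk' t r u s * DBGroup.mk' t r v s'
      = DBGroup.mk' t r (u + shiftEquiv t r s v) (s + s') := rfl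

lemma shift_single (t r : ℕ) (s : ZMod r) (a : ZMod t) :
    shiftEquiv t r s (Pi.single 0 a) = Pi.single s a := by
  funext i
  simp [shiftEquiv, Pi.single_apply, sub_eq_zero]

lemma prod_range_eq (t r : ℕ) (a : ℕ → ZMod t) (k : ℕ) :
    ((List.range k).map (fun j => DBGroup.mk' t r (Pi.single 0 (a j)) 1)).prod
      = DBGroup.mk' t r (∑ j ∈ Finset.range k, Pi.single ((j : ZMod r)) (a j)) (k : ZMod r) := by
  induction k with
  | zero =>
      simp only [List.range_zero, List.map_nil, List.prod_nil, Finset.range_zero,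
        Finset.sum_empty, Nat.cast_zero]
      rfl
  | succ n ih =>
      rw [List.range_succ, List.map_append, List.prod_append, List.map_singleton,
        List.prod_singleton, ih, mk'_mul, Finset.sum_range_succ, shift_single]
      push_cast
      rfl

lemma sum_single_eq (t r : ℕ) [NeZero r] (v : ZMod r → ZMod t) :
    ∑ j ∈ Finset.range r, Pi.single ((j : ZMod r)) (v (j : ZMod r)) = v := by
  conv_rhs => rw [← Finset.univ_sum_single v]
  refine Finset.sum_nbij' (fun j => ((j : ZMod r))) (fun i => i.val) ?_ ?_ ?_ ?_ ?_
  · intro j hj; exact Finset.mem_univ _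
  · intro i _; simpa [Finset.mem_range] using ZMod.val_lt i
  · intro j hj
    simp only [Finset.mem_range] at hj
    exact ZMod.val_cast_of_lt hj
  · intro i _; exact ZMod.natCast_rightInverse i
  · intro j hj; rfl

/-- With `S` consisting of the `t` shift-and-add elements `(a,0,…,0;1)` together with
the cyclic-shift elements `(0,…,0;s)` for `2 ≤ s ≤ r-1`, the Cayley digraph of
`G = (Z_t)^r ⋊ Z_r` on `S` has diameter at most `r+1`: every element is a product of
at most `r+1` elements of `S`. -/
theorem dbGroup_diameter_firstConstruction (t r : ℕ) (ht : 2 ≤ t) (hr : 2 ≤ r)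
    (S : Set (DBGroup t r))
    (hS : S = {x | ∃ a : ZMod t, x = DBGroup.mk' t r (Pi.single (0 : ZMod r) a) 1}
            ∪ {x | ∃ s : ℕ, 2 ≤ s ∧ s ≤ r - 1 ∧ x = DBGroup.mk' t r 0 (s : ZMod r)})
    (g : DBGroup t r) :
    ∃ l : List (DBGroup t r), (∀ x ∈ l, x ∈ S) ∧ l.length ≤ r + 1 ∧ l.prod = g := by
  haveI : NeZero r := ⟨by omega⟩
  obtain ⟨gl, gr⟩ := g
  set v : ZMod r → ZMod t := Multiplicative.toAdd gl with hv
  set s : ZMod r := Multiplicative.toAdd gr with hsdef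
  have hg : (⟨gl, gr⟩ : DBGroup t r) = DBGroup.mk' t r v s := rfl
  rw [hg]
  set L : List (DBGroup t r) :=
    (List.range r).map (fun j : ℕ => DBGroup.mk' t r (Pi.single 0 (v ((j : ℕ) : ZMod r))) 1) with hL
  have hbase : L.prod = DBGroup.mk' t r v 0 := by
    rw [hL, prod_range_eq, sum_single_eq, ZMod.natCast_self]
  have hmemL : ∀ x ∈ L, x ∈ S := by
    intro x hx
    rw [hL, List.mem_map] at hx
    obtain ⟨j, _, rfl⟩ := hx
    rw [hS]; left; exact ⟨v (j : ZMod r), rfl⟩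
  have hlenL : L.length = r := by simp [hL]
  have hval : ((s.val : ℕ) : ZMod r) = s := ZMod.natCast_rightInverse s
  have hvlt : s.val < r := ZMod.val_lt s
  by_cases h0 : s.val = 0
  · refine ⟨L, hmemL, by omega, ?_⟩
    rw [hbase]
    have : s = 0 := by rw [← hval, h0, Nat.cast_zero]
    rw [this]
  · by_cases h1 : s.val = 1
    · refine ⟨L ++ [DBGroup.mk' t r (Pi.single (0 : ZMod r) (0 : ZMod t)) 1], ?_, ?_, ?_⟩
      · intro x hx
        rcases List.mem_append.1 hx with hx | hx
        · exact hmemL x hx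
        · rw [List.mem_singleton] at hx
          rw [hS]; left; exact ⟨0, hx⟩
      · simp [hlenL]
      · rw [List.prod_append, List.prod_singleton, hbase, mk'_mul]
        have hs1 : s = 1 := by rw [← hval, h1, Nat.cast_one]
        rw [Pi.single_zero, map_zero, add_zero, zero_add, hs1]
    · refine ⟨L ++ [DBGroup.mk' t r 0 ((s.val : ℕ) : ZMod r)], ?_, ?_, ?_⟩
      · intro x hx
        rcases List.mem_append.1 hx with hx | hx
        · exact hmemL x hx
        · rw [List.mem_singleton] at hx
          rw [hS]; right; exact ⟨s.val, by omega, by omega, hx⟩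
      · simp [hlenL]
      · rw [List.prod_append, List.prod_singleton, hbase, mk'_mul]
        rw [map_zero, add_zero, zero_add, hval]
end

section
/- For any k ≥ 4 and d ≥ k−1, there exists a group G and a generating set S of G with |S| = d such that |G| = (k−1)(d−k+3)^{k−1} and the Cayley digraph Cay(G,S) has diameter at most k. -/
/-!
Take the wreath product `ℤ/n ≀ ℤ/m` with `m = k - 1` and `n = d - k + 3`, of order `m * n ^ m`:
lamp configurations `ℤ/m → ℤ/n` together with the position of a lamplighter on the cycle `ℤ/m`.
As generators take the `n` elements "add `a` to the lamp at the current position, then step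
forward by one" and the `m - 2` moves by `i ∉ {0, 1}`; the move by `1` is the first kind of
generator with `a = 0`. Going once around the cycle with `m` generators of the first kind produces
any lamp configuration and returns to the start, and one more move reaches any position, so every
element is a product of at most `m + 1 = k` generators.
-/

open Multiplicative Finset

lemma Subgroup.closure_eq_top_of_forall_exists_list_prod {G : Type*} [Group G] {S : Set G}
    (h : ∀ g : G, ∃ l : List G, (∀ x ∈ l, x ∈ S) ∧ l.prod = g) : Subgroup.closure S = ⊤ := by
  refine eq_top_iff.2 fun g _ => ?_
  obtain ⟨l, hl, rfl⟩ := h g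
  exact Subgroup.list_prod_mem _ fun x hx => Subgroup.subset_closure (hl x hx)

lemma ZMod.sum_range_natCast_eq_sum_univ {m : ℕ} [NeZero m] {M : Type*} [AddCommMonoid M]
    (g : ZMod m → M) : ∑ t ∈ range m, g t = ∑ x, g x :=
  sum_nbij' (↑) ZMod.val (by simp) (by simp [ZMod.val_lt])
    (fun _ ht => ZMod.val_cast_of_lt (mem_range.1 ht)) (fun x _ => ZMod.natCast_zmod_val x)
    (fun _ _ => rfl)

def ZModWreath.shift (m n : ℕ) :
    Multiplicative (ZMod m) →* MulAut (Multiplicative (ZMod m → ZMod n)) where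
  toFun i :=
    { toFun := fun v => ofAdd fun x => v.toAdd (x - i.toAdd)
      invFun := fun v => ofAdd fun x => v.toAdd (x + i.toAdd)
      left_inv := fun v => by simp
      right_inv := fun v => by simp
      map_mul' := fun _ _ => rfl }
  map_one' := by ext; simp
  map_mul' := fun i j => by ext; simp [sub_sub]

abbrev ZModWreath (m n : ℕ) :=
  Multiplicative (ZMod m → ZMod n) ⋊[ZModWreath.shift m n] Multiplicative (ZMod m)

namespace ZModWreath

variable {m n : ℕ}

@[simp]
lemma toAdd_shift_apply (i : Multiplicative (ZMod m)) (v : Multiplicative (ZMod m → ZMod n))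
    (x : ZMod m) : toAdd (shift m n i v) x = toAdd v (x - toAdd i) := rfl

lemma shift_ofAdd_single (i : ZMod m) (a : ZMod n) :
    shift m n (ofAdd i) (ofAdd (Pi.single 0 a)) = ofAdd (Pi.single i a) := by
  apply toAdd.injective
  ext x
  simp [Pi.single_apply, sub_eq_zero]

variable (m n)

instance [NeZero m] [NeZero n] : Fintype (ZModWreath m n) :=
  Fintype.ofEquiv _ SemidirectProduct.equivProd.symm

lemma card_eq [NeZero m] : Nat.card (ZModWreath m n) = m * n ^ m := by
  rw [SemidirectProduct.card, Nat.card_congr toAdd, Nat.card_congr toAdd, Nat.card_fun]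
  simp [mul_comm]

variable {m n}

def move (i : ZMod m) : ZModWreath m n := ⟨1, ofAdd i⟩

def lampMove (a : ZMod n) : ZModWreath m n := ⟨ofAdd (Pi.single 0 a), ofAdd 1⟩

lemma lampMove_zero : lampMove (m := m) (0 : ZMod n) = move 1 := by
  simp [lampMove, move]

lemma move_injective : Function.Injective (move (m := m) (n := n)) := by
  intro i j h
  simpa [move, SemidirectProduct.ext_iff] using h

lemma lampMove_injective : Function.Injective (lampMove (m := m) (n := n)) := by
  intro a b h
  simpa [lampMove] using congr_arg (fun g : ZModWreath m n => toAdd g.left 0) h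

lemma lampMove_ne_move {a : ZMod n} {i : ZMod m} (hi : i ≠ 1) : lampMove a ≠ move i := by
  intro h
  exact hi (by simpa [lampMove, move] using congr_arg SemidirectProduct.right h.symm)

lemma prod_map_range_lampMove (f : ℕ → ZMod n) (j : ℕ) :
    ((List.range j).map (lampMove ∘ f)).prod =
      (⟨ofAdd (∑ t ∈ range j, Pi.single (t : ZMod m) (f t)), ofAdd (j : ZMod m)⟩ :
        ZModWreath m n) := by
  induction j with
  | zero => ext1 <;> simp
  | succ j ih =>
    rw [List.range_succ, List.map_append, List.prod_append, ih]
    ext1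
    · simp [lampMove, shift_ofAdd_single, sum_range_succ]
    · simp [lampMove]

variable (m n) in
def gens [NeZero m] [NeZero n] : Finset (ZModWreath m n) :=
  univ.image lampMove ∪ (univ \ {0, 1}).image move

lemma move_mem_gens [NeZero m] [NeZero n] {i : ZMod m} (hi : i ≠ 0) : move i ∈ gens m n := by
  by_cases h1 : i = 1
  · exact mem_union_left _ (mem_image.2 ⟨0, mem_univ _, h1 ▸ lampMove_zero⟩)
  · exact mem_union_right _ (mem_image.2 ⟨i, by simp [hi, h1], rfl⟩)

lemma card_gens [NeZero m] [NeZero n] (hm : 2 ≤ m) : (gens m n).card = n + (m - 2) := by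
  have : Fact (1 < m) := ⟨hm⟩
  rw [gens, card_union_of_disjoint, card_image_of_injective _ lampMove_injective,
    card_image_of_injective _ move_injective, card_sdiff_of_subset (subset_univ _),
    card_pair zero_ne_one]
  · simp [ZMod.card]
  · simp only [disjoint_left, mem_image]
    rintro _ ⟨a, -, rfl⟩ ⟨i, hi, h⟩
    exact lampMove_ne_move (fun h1 => (mem_sdiff.1 hi).2 (by simp [h1])) h.symm

lemma prod_map_range_lampMove_eq [NeZero m] (v : ZMod m → ZMod n) :
    ((List.range m).map (lampMove ∘ fun t : ℕ => v t)).prod = (⟨ofAdd v, 1⟩ : ZModWreath m n) := by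
  rw [prod_map_range_lampMove, ZMod.natCast_self, ofAdd_zero,
    ZMod.sum_range_natCast_eq_sum_univ fun x => Pi.single x (v x), univ_sum_single]

lemma exists_list_prod_eq [NeZero m] [NeZero n] (g : ZModWreath m n) :
    ∃ l : List (ZModWreath m n), (∀ x ∈ l, x ∈ gens m n) ∧ l.length ≤ m + 1 ∧ l.prod = g := by
  obtain ⟨v, i⟩ := g
  set walk := (List.range m).map (lampMove ∘ fun t : ℕ => toAdd v t)
  have hwalk : ∀ x ∈ walk, x ∈ gens m n := by
    simp only [walk, List.mem_map, Function.comp_apply]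
    rintro _ ⟨t, -, rfl⟩
    exact mem_union_left _ (mem_image_of_mem _ (mem_univ _))
  by_cases hi : i = 1
  · refine ⟨walk, hwalk, by simp [walk], ?_⟩
    rw [prod_map_range_lampMove_eq, ofAdd_toAdd, hi]
  · refine ⟨walk ++ [move (toAdd i)], ?_, by simp [walk], ?_⟩
    · simpa [or_imp, forall_and] using ⟨hwalk, move_mem_gens (toAdd_eq_zero.not.2 hi)⟩
    · rw [List.prod_append, prod_map_range_lampMove_eq, ofAdd_toAdd, List.prod_singleton]
      ext1 <;> simp [move]

end ZModWreath

/-- Theorem 1 (first directed construction): for any `k ≥ 4` and `d ≥ k-1` there is a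
Cayley digraph of diameter at most `k`, outdegree `d`, and order `(k-1)(d-k+3)^(k-1)`. -/
theorem cayley_digraph_first_construction (k d : ℕ) (hk : 4 ≤ k) (hd : k - 1 ≤ d) :
    ∃ (G : Type) (_ : Group G) (_ : Fintype G) (S : Finset G),
      S.card = d ∧
      Nat.card G = (k - 1) * (d + 3 - k) ^ (k - 1) ∧
      Subgroup.closure (S : Set G) = ⊤ ∧
      ∀ g : G, ∃ l : List G, (∀ x ∈ l, x ∈ S) ∧ l.length ≤ k ∧ l.prod = g := by
  have : NeZero (k - 1) := ⟨by omega⟩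
  have : NeZero (d + 3 - k) := ⟨by omega⟩
  have hwords := ZModWreath.exists_list_prod_eq (m := k - 1) (n := d + 3 - k)
  refine ⟨ZModWreath (k - 1) (d + 3 - k), inferInstance, inferInstance, ZModWreath.gens _ _,
    ?_, ZModWreath.card_eq _ _, ?_, fun g => ?_⟩
  · rw [ZModWreath.card_gens (by omega)]
    omega
  · refine Subgroup.closure_eq_top_of_forall_exists_list_prod fun g => ?_
    obtain ⟨l, hl, -, hprod⟩ := hwords g
    exact ⟨l, hl, hprod⟩
  · obtain ⟨l, hl, hlen, hprod⟩ := hwords g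
    exact ⟨l, hl, by omega, hprod⟩
end

section
/- For any k ≥ 4 and d ≥ k+1, there exists a group G and a symmetric generating set S of G (i.e., S = S^{−1}, not containing the identity) with |S| ≤ d, such that |G| = (k−1)(⌊(d−k)/2⌋+2)^{k−1} and the Cayley graph Cay(G,S) has diameter at most k. -/
/-!
Take the regular wreath product `G = C_m ≀ C_n` with `n = k - 1`, `m = ⌊(d - k)/2⌋ + 2`, so that
`|G| = n m^n`, and a generator `q` of `C_n`. Right multiplication by `s_x = (δ₁ x, q)` writes `x` at
the current position `r` of an element `(f, r)` and moves that position to `r q`; so `n` such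
letters produce any `(f, 1)`, and one rotation `(1, r)` more reaches every element. The generating
set `{s_x^{±1} : x ≠ 1} ∪ {(1, r) : r ≠ 1}` (note `s_1 = (1, q)` is a rotation) has at most
`2(m - 1) + (n - 1) ≤ d` elements.
-/

open scoped Pointwise
open Finset

lemma exists_pow_eq_of_powers_eq_top {Q : Type*} [LeftCancelMonoid Q] [Finite Q] {q : Q}
    (hq : Submonoid.powers q = ⊤) (y : Q) :
    ∃ i < orderOf q, q ^ i = y := by
  obtain ⟨i, rfl⟩ := (Submonoid.mem_powers_iff _ _).1 (hq ▸ Submonoid.mem_top y)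
  exact ⟨i % orderOf q, Nat.mod_lt _ (orderOf_pos q), pow_mod_orderOf q i⟩

namespace RegularWreathProduct

variable {D Q : Type*} [Group D] [Group Q] [DecidableEq Q]

instance [Fintype Q] [DecidableEq D] : DecidableEq (D ≀ᵣ Q) :=
  (equivProd D Q).decidableEq

def stepGen (q : Q) (x : D) : D ≀ᵣ Q := ⟨Pi.mulSingle 1 x, q⟩

lemma mul_stepGen (a : D ≀ᵣ Q) (q : Q) (x : D) :
    a * stepGen q x = ⟨a.left * Pi.mulSingle a.right x, a.right * q⟩ := by
  ext y
  · simp [stepGen, mul_def, Pi.mulSingle_apply, inv_mul_eq_one, @eq_comm _ y]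
  · rfl

lemma stepGen_one (q : Q) : stepGen q (1 : D) = inl q := by
  ext <;> simp [stepGen]

lemma exists_stepGen_word (q : Q) (t : ℕ) (f : Q → D)
    (hf : ∀ y, f y ≠ 1 → ∃ i < t, q ^ i = y) :
    ∃ l : List D, l.length = t ∧ (l.map (stepGen q)).prod = ⟨f, q ^ t⟩ := by
  induction t generalizing f with
  | zero =>
    have hf1 : f = 1 := funext fun y => by_contra fun h => by simpa using hf y h
    exact ⟨[], rfl, by rw [hf1, pow_zero]; rfl⟩
  | succ t ih =>
    obtain ⟨l, hlen, hprod⟩ := ih (f * Pi.mulSingle (q ^ t) (f (q ^ t))⁻¹) fun y hy => by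
      by_cases hyt : y = q ^ t
      · simp [hyt] at hy
      · obtain ⟨i, hi, rfl⟩ := hf y (by simpa [Pi.mulSingle_apply, hyt] using hy)
        exact ⟨i, lt_of_le_of_ne (Nat.le_of_lt_succ hi) (by rintro rfl; exact hyt rfl), rfl⟩
    refine ⟨l ++ [f (q ^ t)], by simp [hlen], ?_⟩
    rw [List.map_append, List.prod_append, hprod, List.map_singleton, List.prod_singleton,
      mul_stepGen, mul_assoc, ← Pi.mulSingle_mul, inv_mul_cancel, Pi.mulSingle_one, mul_one,
      pow_succ]

lemma exists_stepGen_word_eq_mk_one [Finite Q] {q : Q} (hq : Submonoid.powers q = ⊤)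
    (f : Q → D) :
    ∃ l : List D, l.length = orderOf q ∧ (l.map (stepGen q)).prod = ⟨f, 1⟩ := by
  simpa only [pow_orderOf_eq_one] using
    exists_stepGen_word q (orderOf q) f fun y _ => exists_pow_eq_of_powers_eq_top hq y

variable [Fintype D] [DecidableEq D] [Fintype Q]

def cayleyGens (q : Q) : Finset (D ≀ᵣ Q) :=
  (univ.erase 1).image (stepGen q) ∪ ((univ.erase 1).image (stepGen q))⁻¹ ∪
    (univ.erase 1).image inl

variable {q : Q}

lemma card_cayleyGens_le :
    #(cayleyGens (D := D) q) ≤ 2 * (Fintype.card D - 1) + (Fintype.card Q - 1) := by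
  have hA : #((univ.erase (1 : D)).image (stepGen q)) ≤ Fintype.card D - 1 :=
    card_image_le.trans (card_erase_of_mem (mem_univ _)).le
  have hC : #((univ.erase (1 : Q)).image (inl : Q →* D ≀ᵣ Q)) ≤ Fintype.card Q - 1 :=
    card_image_le.trans (card_erase_of_mem (mem_univ _)).le
  unfold cayleyGens
  grw [card_union_le, card_union_le, card_inv, hA, hC]
  omega

lemma inl_mem_cayleyGens {r : Q} (hr : r ≠ 1) : (inl r : D ≀ᵣ Q) ∈ cayleyGens q :=
  mem_union_right _ (mem_image_of_mem _ (mem_erase.2 ⟨hr, mem_univ r⟩))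

lemma stepGen_mem_cayleyGens (hq : q ≠ 1) (x : D) : stepGen q x ∈ cayleyGens q := by
  rcases eq_or_ne x 1 with rfl | hx
  · rw [stepGen_one]
    exact inl_mem_cayleyGens hq
  · exact mem_union_left _ (mem_union_left _ (mem_image_of_mem _ (mem_erase.2 ⟨hx, mem_univ x⟩)))

lemma one_notMem_cayleyGens (hq : q ≠ 1) : (1 : D ≀ᵣ Q) ∉ cayleyGens q := by
  simp only [cayleyGens, mem_union, mem_image, mem_inv', mem_erase, mem_univ, and_true]
  rintro ((⟨x, -, hx⟩ | ⟨x, -, hx⟩) | ⟨r, hr, hr1⟩)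
  · exact hq (congrArg right hx)
  · exact hq (by simpa [stepGen] using congrArg right hx)
  · exact hr (congrArg right hr1)

lemma inv_mem_cayleyGens {s : D ≀ᵣ Q} (hs : s ∈ cayleyGens q) : s⁻¹ ∈ cayleyGens q := by
  simp only [cayleyGens, mem_union, mem_image, mem_inv', mem_erase, mem_univ, and_true] at hs ⊢
  rcases hs with (hs | hs) | ⟨r, hr, rfl⟩
  · exact Or.inl (Or.inr (by simpa using hs))
  · exact Or.inl (Or.inl hs)
  · exact Or.inr ⟨r⁻¹, inv_ne_one.2 hr, map_inv _ _⟩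

lemma exists_cayleyGens_word (hq : Submonoid.powers q = ⊤) (hq1 : q ≠ 1) (g : D ≀ᵣ Q) :
    ∃ l : List (D ≀ᵣ Q), (∀ s ∈ l, s ∈ cayleyGens q) ∧ l.length ≤ orderOf q + 1 ∧ l.prod = g := by
  obtain ⟨l, hlen, hprod⟩ := exists_stepGen_word_eq_mk_one hq g.left
  have hg : g = ⟨g.left, 1⟩ * inl g.right := by ext <;> simp
  have hl : ∀ s ∈ l.map (stepGen q), s ∈ cayleyGens q := by
    simpa using fun x _ => stepGen_mem_cayleyGens hq1 x
  rcases eq_or_ne g.right 1 with hr | hr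
  · refine ⟨l.map (stepGen q), hl, by simp [hlen], ?_⟩
    rw [hprod, hg, hr, map_one, mul_one]
  · refine ⟨l.map (stepGen q) ++ [inl g.right], ?_, by simp [hlen], ?_⟩
    · intro s hs
      rcases List.mem_append.1 hs with hs | hs
      · exact hl s hs
      · rw [List.mem_singleton.1 hs]
        exact inl_mem_cayleyGens hr
    · rw [List.prod_append, hprod, List.prod_singleton, ← hg]

end RegularWreathProduct

lemma powers_ofAdd_one_eq_top (n : ℕ) [NeZero n] :
    Submonoid.powers (Multiplicative.ofAdd (1 : ZMod n)) = ⊤ :=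
  eq_top_iff.2 fun y _ => ⟨y.toAdd.val, by simp [← ofAdd_nsmul]⟩

open RegularWreathProduct in
/-- Theorem 2 (first undirected construction): for any `k ≥ 4` and `d ≥ k+1` there is a
Cayley graph of diameter at most `k`, degree at most `d`, and order
`(k-1)(⌊(d-k)/2⌋+2)^(k-1)`. -/
theorem cayley_graph_first_construction (k d : ℕ) (hk : 4 ≤ k) (hd : k + 1 ≤ d) :
    ∃ (G : Type) (_ : Group G) (_ : Fintype G) (S : Finset G),
      S.card ≤ d ∧
      (1 : G) ∉ S ∧
      (∀ s ∈ S, s⁻¹ ∈ S) ∧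
      Nat.card G = (k - 1) * ((d - k) / 2 + 2) ^ (k - 1) ∧
      Subgroup.closure (S : Set G) = ⊤ ∧
      ∀ g : G, ∃ l : List G, (∀ x ∈ l, x ∈ S) ∧ l.length ≤ k ∧ l.prod = g := by
  set n := k - 1
  set m := (d - k) / 2 + 2
  have : NeZero n := ⟨by omega⟩
  have : NeZero m := ⟨by omega⟩
  set q : Multiplicative (ZMod n) := .ofAdd 1
  have hq_order : orderOf q = n := by
    rw [orderOf_ofAdd_eq_addOrderOf, ZMod.addOrderOf_one]
  have hq1 : q ≠ 1 := fun h => by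
    rw [← orderOf_eq_one_iff, hq_order] at h
    omega
  have hword (g : Multiplicative (ZMod m) ≀ᵣ Multiplicative (ZMod n)) :
      ∃ l : List _, (∀ s ∈ l, s ∈ cayleyGens q) ∧ l.length ≤ k ∧ l.prod = g := by
    obtain ⟨l, hl, hlen, hprod⟩ := exists_cayleyGens_word (powers_ofAdd_one_eq_top n) hq1 g
    exact ⟨l, hl, by rw [hq_order] at hlen; omega, hprod⟩
  refine ⟨_, inferInstance, Fintype.ofFinite _, cayleyGens q, ?_, one_notMem_cayleyGens hq1,
    fun _ => inv_mem_cayleyGens, ?_, ?_, hword⟩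
  · grw [card_cayleyGens_le]
    simp only [Fintype.card_multiplicative, ZMod.card]
    omega
  · simp [RegularWreathProduct.card, mul_comm]
  · refine eq_top_iff.2 fun g _ => ?_
    obtain ⟨l, hl, -, rfl⟩ := hword g
    exact Subgroup.list_prod_mem _ fun s hs => Subgroup.subset_closure (hl s hs)
end

section
/- For every integer k ≥ 2 and every real θ with 0 ≤ θ ≤ (k−2)/(2k−2), one has (1 − θ)·(1 + 2θ/(k+2−2θ))^k ≥ 1. -/
/-!
Write `x = 2θ/(k+2-2θ)`. Bernoulli's inequality gives `(1+x)^k ≥ 1 + kx`, and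
`(1-θ)(1+kx) - 1 = θ((k-2) - (2k-2)θ)/(k+2-2θ)`, which is nonnegative exactly in the range
`0 ≤ θ ≤ (k-2)/(2k-2)`.
-/

lemma one_sub_mul_one_add_mul_div_sub_one (k θ : ℝ) (hd : k + 2 - 2 * θ ≠ 0) :
    (1 - θ) * (1 + k * (2 * θ / (k + 2 - 2 * θ))) - 1 =
      θ * ((k - 2) - θ * (2 * k - 2)) / (k + 2 - 2 * θ) := by
  rw [eq_div_iff hd, sub_mul, mul_assoc, add_mul, mul_assoc k, div_mul_cancel₀ _ hd]
  ring

lemma one_le_one_sub_mul_one_add_mul_div (k θ : ℝ) (h0 : 0 ≤ θ)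
    (hθ : θ * (2 * k - 2) ≤ k - 2) (hd : 0 < k + 2 - 2 * θ) :
    1 ≤ (1 - θ) * (1 + k * (2 * θ / (k + 2 - 2 * θ))) := by
  have hnonneg : 0 ≤ θ * ((k - 2) - θ * (2 * k - 2)) / (k + 2 - 2 * θ) :=
    div_nonneg (mul_nonneg h0 (sub_nonneg.mpr hθ)) hd.le
  rw [← one_sub_mul_one_add_mul_div_sub_one k θ hd.ne'] at hnonneg
  linarith

/-- For every integer `k ≥ 2` and real `0 ≤ θ ≤ (k-2)/(2k-2)`,
`(1-θ)(1 + 2θ/(k+2-2θ))^k ≥ 1`. -/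
theorem key_inequality (k : ℕ) (hk : 2 ≤ k) (θ : ℝ)
    (h0 : 0 ≤ θ) (h1 : θ ≤ ((k : ℝ) - 2) / (2 * k - 2)) :
    1 ≤ (1 - θ) * (1 + 2 * θ / ((k : ℝ) + 2 - 2 * θ)) ^ k := by
  have hk2 : (2 : ℝ) ≤ k := by exact_mod_cast hk
  have hθ : θ * (2 * k - 2) ≤ k - 2 := (le_div_iff₀ (by linarith)).mp h1
  have hθ_half : 2 * θ ≤ 1 := by nlinarith
  have hd : 0 < (k : ℝ) + 2 - 2 * θ := by linarith
  have hx : 0 ≤ 2 * θ / ((k : ℝ) + 2 - 2 * θ) := div_nonneg (by linarith) hd.le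
  calc 1 ≤ (1 - θ) * (1 + k * (2 * θ / ((k : ℝ) + 2 - 2 * θ))) :=
        one_le_one_sub_mul_one_add_mul_div k θ h0 hθ hd
    _ ≤ (1 - θ) * (1 + 2 * θ / ((k : ℝ) + 2 - 2 * θ)) ^ k :=
        mul_le_mul_of_nonneg_left (one_add_mul_le_pow (by linarith) k) (by linarith)
end

section
/- For any k ≥ 3, there are arbitrarily large values of d for which there exists a group G and a symmetric generating set S with |S| = d such that the Cayley graph Cay(G,S) has diameter at most k and |G| ≥ (1/k)·( (k/(2k+4))·( d + k·log₂(d/2) − log₂log₂ d − log₂(8k²) ) )^k. -/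
/-!
Let `M = k²m` and `Γ = ℤ_M ≀ ℤ_k = ℤ_M^{ℤ_k} ⋊ ℤ_k`. The group is the kernel `K` of the
surjection `balance : Γ → ℤ_{k²}`, `(v, r) ↦ Σ v - k r`, so `|K| = M^k k / k² = M^k / k`.
The connection set consists of the `M` elements `a_x = (x e₀ + κ(x) e₁, 1)` (`step corr x`),
where `κ(x) ≡ k - x (mod k²)` puts them in `K`, the at most `k m` elements of `K` of the form
`(t e₀, j)`, and their inverses; so `M - 1 ≤ d ≤ 2(M + k m)`.
Every `g = (v, r)` of `Γ` equals `a_{x₀} ⋯ a_{x_{k-2}} (t e₀, r + 1)`, the `xᵢ` being chosen one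
after the other to clear the coordinates of `v`; if `g ∈ K` then so is the last factor, hence the
diameter is at most `k`. The stated bound is then elementary once `log₂ (d / 2) ≤ m`, which holds
for `m` large.
-/

open Real

section WordDiam

variable {G : Type*} [Group G]

def WordDiamLE (S : Set G) (n : ℕ) : Prop :=
  ∀ g : G, ∃ l : List G, (∀ x ∈ l, x ∈ S) ∧ l.length ≤ n ∧ l.prod = g

lemma WordDiamLE.closure_eq_top {S : Set G} {n : ℕ} (h : WordDiamLE S n) :
    Subgroup.closure S = ⊤ := by
  refine eq_top_iff.2 fun g _ => ?_
  obtain ⟨l, hl, -, rfl⟩ := h g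
  exact Subgroup.list_prod_mem _ fun x hx => Subgroup.subset_closure (hl x hx)

lemma WordDiamLE.subtype {H : Subgroup G} [DecidablePred (· ∈ H)] {T : Finset G}
    (hT : ∀ x ∈ T, x ∈ H) {n : ℕ}
    (h : ∀ g ∈ H, ∃ l : List G, (∀ x ∈ l, x ∈ T) ∧ l.length ≤ n ∧ l.prod = g) :
    WordDiamLE ((T.subtype (· ∈ H) : Finset H) : Set H) n := fun g => by
  obtain ⟨l, hl, hlen, hprod⟩ := h g g.2
  lift l to List H using fun x hx => hT x (hl x hx)
  refine ⟨l, fun x hx => ?_, by simpa using hlen, Subtype.ext ?_⟩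
  · simpa using hl x (List.mem_map_of_mem hx)
  · rwa [Subgroup.val_list_prod]

lemma List.prod_filter_ne_one {α : Type*} [Monoid α] [DecidableEq α] (l : List α) :
    (l.filter (· ≠ 1)).prod = l.prod := by
  induction l with
  | nil => rfl
  | cons a l ih =>
    rw [List.filter_cons]
    by_cases ha : a = 1 <;> simp_all

open Pointwise

variable [DecidableEq G]

def connectionSet (T : Finset G) : Finset G := (T ∪ T⁻¹).erase 1

lemma one_notMem_connectionSet (T : Finset G) : 1 ∉ connectionSet T :=
  Finset.notMem_erase 1 _

lemma inv_mem_connectionSet {T : Finset G} {s : G} (hs : s ∈ connectionSet T) :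
    s⁻¹ ∈ connectionSet T := by
  simp only [connectionSet, Finset.mem_erase, Finset.mem_union, Finset.mem_inv', inv_inv] at hs ⊢
  exact ⟨inv_ne_one.2 hs.1, hs.2.symm⟩

lemma card_connectionSet_le (T : Finset G) : (connectionSet T).card ≤ 2 * T.card :=
  calc (connectionSet T).card ≤ (T ∪ T⁻¹).card := Finset.card_erase_le
    _ ≤ T.card + T⁻¹.card := Finset.card_union_le _ _
    _ = 2 * T.card := by rw [Finset.card_inv, two_mul]

lemma card_sub_one_le_card_connectionSet (T : Finset G) : T.card - 1 ≤ (connectionSet T).card :=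
  (Nat.sub_le_sub_right (Finset.card_le_card Finset.subset_union_left) 1).trans
    Finset.pred_card_le_card_erase

lemma WordDiamLE.connectionSet {T : Finset G} {n : ℕ} (h : WordDiamLE (T : Set G) n) :
    WordDiamLE (connectionSet T : Set G) n := fun g => by
  obtain ⟨l, hl, hlen, rfl⟩ := h g
  refine ⟨l.filter (· ≠ 1), fun x hx => ?_, (List.length_filter_le _ _).trans hlen,
    List.prod_filter_ne_one l⟩
  rw [List.mem_filter, decide_eq_true_iff] at hx
  exact Finset.mem_erase.2 ⟨hx.2, Finset.mem_union_left _ (hl x hx.1)⟩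

end WordDiam

lemma ZMod.natCast_ne_zero_of_lt {k i : ℕ} (h0 : 0 < i) (hi : i < k) : (i : ZMod k) ≠ 0 := by
  rw [Ne, ZMod.natCast_eq_zero_iff]
  exact Nat.not_dvd_of_pos_of_lt h0 hi

lemma ZMod.natCast_ne_one_of_lt {k i : ℕ} (h1 : 1 < i) (hi : i < k) : (i : ZMod k) ≠ 1 := by
  rw [← Nat.cast_one, Ne, ZMod.natCast_eq_natCast_iff', Nat.mod_eq_of_lt hi,
    Nat.mod_eq_of_lt (h1.trans hi)]
  omega

lemma ZMod.exists_lt_eq_natCast_mul {a b : ℕ} [NeZero (a * b)] (u : ZMod (a * b))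
    (hu : ZMod.castHom (Dvd.intro b rfl) (ZMod a) u = 0) :
    ∃ s < b, u = ((a * s : ℕ) : ZMod (a * b)) := by
  rw [ZMod.castHom_apply, ZMod.cast_eq_val, ZMod.natCast_eq_zero_iff] at hu
  obtain ⟨s, hs⟩ := hu
  refine ⟨s, ?_, by rw [← hs, ZMod.natCast_zmod_val]⟩
  have := u.val_lt
  rw [hs] at this
  exact Nat.lt_of_mul_lt_mul_left this

@[ext]
structure CycWreath (M k : ℕ) where
  v : ZMod k → ZMod M
  r : ZMod k

namespace CycWreath

variable {M k : ℕ}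

instance : Mul (CycWreath M k) := ⟨fun a b => ⟨fun c => a.v c + b.v (c - a.r), a.r + b.r⟩⟩
instance : One (CycWreath M k) := ⟨⟨0, 0⟩⟩
instance : Inv (CycWreath M k) := ⟨fun a => ⟨fun c => -a.v (c + a.r), -a.r⟩⟩

@[simp] lemma mul_v (a b : CycWreath M k) (c : ZMod k) :
    (a * b).v c = a.v c + b.v (c - a.r) := rfl
@[simp] lemma mul_r (a b : CycWreath M k) : (a * b).r = a.r + b.r := rfl
@[simp] lemma one_v : (1 : CycWreath M k).v = 0 := rfl
@[simp] lemma one_r : (1 : CycWreath M k).r = 0 := rfl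
@[simp] lemma inv_v (a : CycWreath M k) (c : ZMod k) : a⁻¹.v c = -a.v (c + a.r) := rfl
@[simp] lemma inv_r (a : CycWreath M k) : a⁻¹.r = -a.r := rfl

instance : Group (CycWreath M k) :=
  Group.ofLeftAxioms
    (fun a b c => by ext <;> simp [add_assoc, sub_sub])
    (fun a => by ext <;> simp)
    (fun a => by ext <;> simp)

def equivProd : CycWreath M k ≃ (ZMod k → ZMod M) × ZMod k where
  toFun g := (g.v, g.r)
  invFun p := ⟨p.1, p.2⟩

noncomputable instance [NeZero M] [NeZero k] : Fintype (CycWreath M k) :=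
  Fintype.ofEquiv _ equivProd.symm

instance [NeZero k] : DecidableEq (CycWreath M k) := equivProd.decidableEq

lemma card_eq [NeZero M] [NeZero k] : Nat.card (CycWreath M k) = M ^ k * k := by
  rw [Nat.card_congr equivProd, Nat.card_prod, Nat.card_fun, Nat.card_zmod, Nat.card_zmod]

def step (f : ZMod M → ZMod M) (x : ZMod M) : CycWreath M k :=
  ⟨Pi.single 0 x + Pi.single 1 (f x), 1⟩

lemma step_injective [Fact (1 < k)] (f : ZMod M → ZMod M) :
    Function.Injective (step f : ZMod M → CycWreath M k) := fun x y hxy => by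
  simpa [step, Pi.single_apply] using congrFun (congrArg v hxy) 0

/-- Peeling `step f (g.v 0)` off on the left clears coordinate `0` of `g`; the disturbance
`f (g.v 0)` lands on coordinate `1`, which the rotation moves back to `0`. -/
lemma exists_eq_prod_step_mul (f : ZMod M → ZMod M) (n : ℕ) (hn : n < k) (g : CycWreath M k)
    (hg : ∀ i : ℕ, n < i → i < k → g.v i = 0) :
    ∃ xs : List (ZMod M), xs.length = n ∧
      ∃ t, g = (xs.map (step f)).prod * ⟨Pi.single 0 t, g.r - n⟩ := by
  induction n generalizing g with
  | zero =>
    refine ⟨[], rfl, g.v 0, ?_⟩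
    ext c
    · by_cases hc : c = 0
      · simp [hc]
      · have : NeZero k := ⟨by omega⟩
        have hval : 0 < c.val := Nat.pos_of_ne_zero ((ZMod.val_ne_zero c).2 hc)
        have := hg c.val hval (ZMod.val_lt c)
        simp_all
    · simp
  | succ n ih =>
    have : Fact (1 < k) := ⟨by omega⟩
    set a : CycWreath M k := step f (g.v 0)
    have hr : (a⁻¹ * g).r - n = g.r - ((n + 1 : ℕ) : ZMod k) := by
      simp only [mul_r, inv_r, a, step]; push_cast; ring
    obtain ⟨xs, hlen, t, ht⟩ := ih (by omega) (a⁻¹ * g) fun i hi hik => by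
      have hv : (a⁻¹ * g).v i = g.v ((i + 1 : ℕ)) - a.v ((i + 1 : ℕ)) := by
        simp only [mul_v, inv_v, inv_r, a, step]; push_cast; ring_nf
      rw [hv]
      rcases Nat.lt_or_ge (i + 1) k with hik' | hik'
      · simp only [a, step, Pi.add_apply, hg _ (by omega) hik',
          Pi.single_eq_of_ne (ZMod.natCast_ne_zero_of_lt i.succ_pos hik'),
          Pi.single_eq_of_ne (ZMod.natCast_ne_one_of_lt (by omega : 1 < i + 1) hik')]
        simp
      · rw [show i + 1 = k by omega, ZMod.natCast_self]
        simp [a, step]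
    rw [hr] at ht
    refine ⟨g.v 0 :: xs, by simp [hlen], t, ?_⟩
    rw [List.map_cons, List.prod_cons, mul_assoc, ← ht, mul_inv_cancel_left]


lemma exists_eq_prod_step_mul_single [NeZero k] (f : ZMod M → ZMod M) (g : CycWreath M k) :
    ∃ xs : List (ZMod M), xs.length = k - 1 ∧
      ∃ t, g = (xs.map (step f)).prod * ⟨Pi.single 0 t, g.r + 1⟩ := by
  have hk := NeZero.pos k
  obtain ⟨xs, hlen, t, ht⟩ :=
    exists_eq_prod_step_mul f (k - 1) (by omega) g fun i hi hik => by omega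
  refine ⟨xs, hlen, t, ?_⟩
  rwa [Nat.cast_pred hk, ZMod.natCast_self, zero_sub, sub_neg_eq_add] at ht

end CycWreath

namespace CycWreath

variable (k m : ℕ)

abbrev toZModSq : ZMod (k * k * m) →+* ZMod (k * k) := ZMod.castHom (Dvd.intro m rfl) _

def mulK : ZMod k →+ ZMod (k * k) :=
  ZMod.lift k ⟨zmultiplesHom _ (k : ZMod (k * k)), by simp [← Nat.cast_mul]⟩

variable [NeZero k]

def balance : CycWreath (k * k * m) k →* Multiplicative (ZMod (k * k)) where
  toFun g := .ofAdd (toZModSq k m (∑ c, g.v c) - mulK k g.r)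
  map_one' := by simp
  map_mul' a b := by
    have hb : ∑ c, b.v (c - a.r) = ∑ c, b.v c := Equiv.sum_comp (Equiv.subRight a.r) b.v
    simp only [mul_v, mul_r, Finset.sum_add_distrib, hb, map_add, ← ofAdd_add]
    congr 1
    ring

@[simp] lemma balance_apply (g : CycWreath (k * k * m) k) :
    balance k m g = .ofAdd (toZModSq k m (∑ c, g.v c) - mulK k g.r) := rfl

lemma single_mem_ker_balance_iff (t : ZMod (k * k * m)) (j : ZMod k) :
    (⟨Pi.single 0 t, j⟩ : CycWreath (k * k * m) k) ∈ (balance k m).ker ↔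
      toZModSq k m t = mulK k j := by
  rw [MonoidHom.mem_ker, balance_apply, ofAdd_eq_one, Fintype.sum_pi_single', sub_eq_zero]

lemma toZModSq_natCast_val (y : ZMod (k * k)) :
    toZModSq k m (y.val : ZMod (k * k * m)) = y := by
  rw [map_natCast, ZMod.natCast_zmod_val]

lemma balance_surjective : Function.Surjective (balance k m) := fun y => by
  refine ⟨⟨Pi.single 0 (y.toAdd.val : ZMod (k * k * m)), 0⟩, ?_⟩
  simp

def corr (x : ZMod (k * k * m)) : ZMod (k * k * m) := (mulK k 1 - toZModSq k m x).val

def bGen (p : ZMod k × ℕ) : CycWreath (k * k * m) k :=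
  ⟨Pi.single 0 ((mulK k p.1).val + k * k * p.2 : ℕ), p.1⟩

lemma step_corr_mem_ker (x : ZMod (k * k * m)) :
    (step (corr k m) x : CycWreath (k * k * m) k) ∈ (balance k m).ker := by
  rw [MonoidHom.mem_ker, balance_apply, ofAdd_eq_one, sub_eq_zero]
  simp only [step, corr, Pi.add_apply, Finset.sum_add_distrib, Fintype.sum_pi_single',
    map_add, toZModSq_natCast_val]
  ring

lemma bGen_mem_ker (p : ZMod k × ℕ) : bGen k m p ∈ (balance k m).ker := by
  rw [bGen, single_mem_ker_balance_iff, Nat.cast_add, map_add, toZModSq_natCast_val, map_natCast,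
    (ZMod.natCast_eq_zero_iff _ _).2 (Dvd.intro _ rfl), add_zero]

variable [NeZero m]

lemma card_ker_balance :
    Nat.card (balance k m).ker * (k * k) = (k * k * m) ^ k * k := by
  rw [← card_eq, Subgroup.card_eq_card_quotient_mul_card_subgroup (balance k m).ker, mul_comm,
    Nat.card_congr (QuotientGroup.quotientKerEquivOfSurjective _ (balance_surjective k m)).toEquiv,
    Nat.card_congr Multiplicative.toAdd, Nat.card_zmod]

lemma exists_bGen_eq {t : ZMod (k * k * m)} {j : ZMod k}
    (h : (⟨Pi.single 0 t, j⟩ : CycWreath (k * k * m) k) ∈ (balance k m).ker) :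
    ∃ s < m, bGen k m (j, s) = ⟨Pi.single 0 t, j⟩ := by
  rw [single_mem_ker_balance_iff] at h
  obtain ⟨s, hs, hts⟩ := ZMod.exists_lt_eq_natCast_mul (t - ((mulK k j).val : ZMod (k * k * m)))
    (by rw [map_sub, toZModSq_natCast_val, h, sub_self])
  refine ⟨s, hs, ?_⟩
  rw [bGen, Nat.cast_add, ← hts, add_sub_cancel]

def gens : Finset (CycWreath (k * k * m) k) :=
  Finset.univ.image (step (corr k m)) ∪ (Finset.univ ×ˢ Finset.range m).image (bGen k m)

lemma gens_subset_ker : ∀ x ∈ gens k m, x ∈ (balance k m).ker := by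
  simp only [gens, Finset.mem_union, Finset.mem_image]
  rintro _ (⟨x, -, rfl⟩ | ⟨p, -, rfl⟩)
  exacts [step_corr_mem_ker k m x, bGen_mem_ker k m p]

lemma exists_list_gens_prod_eq {g : CycWreath (k * k * m) k} (hg : g ∈ (balance k m).ker) :
    ∃ l : List (CycWreath (k * k * m) k),
      (∀ x ∈ l, x ∈ gens k m) ∧ l.length ≤ k ∧ l.prod = g := by
  obtain ⟨xs, hlen, t, hgt⟩ := exists_eq_prod_step_mul_single (corr k m) g
  have hP : (xs.map (step (corr k m))).prod ∈ (balance k m).ker :=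
    Subgroup.list_prod_mem _ fun x hx => by
      obtain ⟨y, -, rfl⟩ := List.mem_map.1 hx
      exact step_corr_mem_ker k m y
  have hb : (⟨Pi.single 0 t, g.r + 1⟩ : CycWreath (k * k * m) k) ∈ (balance k m).ker := by
    rw [eq_inv_mul_of_mul_eq hgt.symm]
    exact mul_mem (inv_mem hP) hg
  obtain ⟨s, hs, hbs⟩ := exists_bGen_eq k m hb
  refine ⟨xs.map (step (corr k m)) ++ [bGen k m (g.r + 1, s)], fun x hx => ?_, ?_, ?_⟩
  · rw [List.mem_append, List.mem_map, List.mem_singleton] at hx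
    rcases hx with ⟨y, -, rfl⟩ | rfl
    · exact Finset.mem_union_left _ (Finset.mem_image_of_mem _ (Finset.mem_univ y))
    · exact Finset.mem_union_right _ (Finset.mem_image_of_mem _ (by simpa using hs))
  · have := NeZero.pos k
    simp only [List.length_append, List.length_map, List.length_singleton, hlen]
    omega
  · rw [List.prod_append, List.prod_singleton, hbs]
    exact hgt.symm

lemma card_gens_le : (gens k m).card ≤ k * k * m + k * m := by
  refine (Finset.card_union_le _ _).trans (add_le_add ?_ ?_)
  · exact Finset.card_image_le.trans (by simp)
  · exact Finset.card_image_le.trans (by simp)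

lemma le_card_gens (hk : 1 < k) : k * k * m ≤ (gens k m).card := by
  have : Fact (1 < k) := ⟨hk⟩
  calc k * k * m = (Finset.univ.image (step (corr k m))).card := by
        rw [Finset.card_image_of_injective _ (step_injective _), Finset.card_univ, ZMod.card]
    _ ≤ (gens k m).card := Finset.card_le_card Finset.subset_union_left

end CycWreath

lemma logb_two_le_of_le_two_pow {x : ℝ} (n : ℕ) (hx : 0 < x) (h : x ≤ 2 ^ n) : logb 2 x ≤ n := by
  simpa [logb_pow] using logb_le_logb_of_le one_lt_two hx h

lemma exists_ge_mul_le_two_pow (c N : ℕ) : ∃ m ≥ N, c * m ≤ 2 ^ m := by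
  have h := (tendsto_pow_const_div_const_pow_of_one_lt 1 one_lt_two).eventually
    (gt_mem_nhds (by positivity : (0 : ℝ) < 1 / (c + 1)))
  obtain ⟨n₀, hn₀⟩ := Filter.eventually_atTop.1 h
  set n := max N n₀
  refine ⟨n, le_max_left _ _, ?_⟩
  have := hn₀ n (le_max_right _ _)
  rw [pow_one, div_lt_div_iff₀ (by positivity) (by positivity)] at this
  exact_mod_cast (by nlinarith : (c : ℝ) * n ≤ 2 ^ n)

lemma order_bound_le (k m d : ℕ) (hk : 3 ≤ k) (hm : 9 ≤ m) (hd₀ : k * k * m ≤ d + 1)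
    (hd : d ≤ 2 * (k * k * m + k * m)) (hpow : (k * k + k) * m ≤ 2 ^ m) :
    (1 / (k : ℝ)) * (((k : ℝ) / (2 * k + 4)) *
        ((d : ℝ) + k * logb 2 ((d : ℝ) / 2) - logb 2 (logb 2 (d : ℝ))
          - logb 2 (8 * (k : ℝ) ^ 2))) ^ k ≤ (1 / (k : ℝ)) * ((k * k * m : ℕ) : ℝ) ^ k := by
  have hk' : (3 : ℝ) ≤ k := by exact_mod_cast hk
  have hm' : (9 : ℝ) ≤ m := by exact_mod_cast hm
  have hd₀' : (k : ℝ) * k * m ≤ d + 1 := by exact_mod_cast hd₀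
  have hd' : (d : ℝ) ≤ 2 * (k * k * m + k * m) := by exact_mod_cast hd
  have hpow' : ((k : ℝ) * k + k) * m ≤ 2 ^ m := by exact_mod_cast hpow
  have hm2 : (m : ℝ) + 1 ≤ 2 ^ m := by exact_mod_cast Nat.lt_two_pow_self
  have hkk : (9 : ℝ) ≤ k * k := by nlinarith
  have hd8 : 8 * (k : ℝ) ^ 2 ≤ d := by
    nlinarith [mul_le_mul_of_nonneg_left hm' (by positivity : (0 : ℝ) ≤ k * k)]
  have hd_ge : (8 : ℝ) ≤ d := by nlinarith
  have hdpow : (d : ℝ) ≤ 2 ^ (m + 1) := by rw [pow_succ]; nlinarith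
  have hL₁ : logb 2 ((d : ℝ) / 2) ≤ m := logb_two_le_of_le_two_pow m (by positivity) (by nlinarith)
  have hL₁₀ : 0 ≤ logb 2 ((d : ℝ) / 2) := logb_nonneg one_lt_two (by nlinarith)
  have hlogd : logb 2 (d : ℝ) ≤ m + 1 := by
    exact_mod_cast logb_two_le_of_le_two_pow (m + 1) (by positivity) hdpow
  have hlogd₁ : 1 ≤ logb 2 (d : ℝ) := by
    simpa using logb_le_logb_of_le one_lt_two two_pos (by nlinarith : (2 : ℝ) ≤ d)
  have hL₂ : logb 2 (logb 2 (d : ℝ)) ≤ m :=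
    logb_two_le_of_le_two_pow m (by linarith) (by linarith)
  have hL₂₀ : 0 ≤ logb 2 (logb 2 (d : ℝ)) := logb_nonneg one_lt_two hlogd₁
  have hL₃ : logb 2 (8 * (k : ℝ) ^ 2) ≤ m + 1 :=
    (logb_le_logb_of_le one_lt_two (by positivity) hd8).trans hlogd
  have hL₃₀ : 0 ≤ logb 2 (8 * (k : ℝ) ^ 2) := logb_nonneg one_lt_two (by nlinarith)
  set X := (d : ℝ) + k * logb 2 ((d : ℝ) / 2) - logb 2 (logb 2 (d : ℝ))
    - logb 2 (8 * (k : ℝ) ^ 2)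
  have hX₀ : 0 ≤ X := by nlinarith
  have hX : (k : ℝ) / (2 * k + 4) * X ≤ ((k * k * m : ℕ) : ℝ) := by
    rw [div_mul_eq_mul_div, div_le_iff₀ (by positivity)]
    push_cast
    nlinarith
  gcongr

/-- Corollary 6: for any `k ≥ 3` there are arbitrarily large degrees `d` for which
there is a Cayley graph of diameter at most `k`, degree `d`, and order at least
`(1/k)·((k/(2k+4))·(d + k·log₂(d/2) − log₂log₂ d − log₂(8k²)))^k`. -/
theorem cayley_graph_second_construction (k : ℕ) (hk : 3 ≤ k) (N : ℕ) :
    ∃ d : ℕ, N ≤ d ∧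
      ∃ (G : Type) (_ : Group G) (_ : Fintype G) (S : Finset G),
        S.card = d ∧
        (1 : G) ∉ S ∧
        (∀ s ∈ S, s⁻¹ ∈ S) ∧
        Subgroup.closure (S : Set G) = ⊤ ∧
        (∀ g : G, ∃ l : List G, (∀ x ∈ l, x ∈ S) ∧ l.length ≤ k ∧ l.prod = g) ∧
        (1 / (k : ℝ)) * (((k : ℝ) / (2 * k + 4)) *
            ((d : ℝ) + k * Real.logb 2 ((d : ℝ) / 2)
              - Real.logb 2 (Real.logb 2 (d : ℝ))
              - Real.logb 2 (8 * (k : ℝ) ^ 2))) ^ k ≤ (Nat.card G : ℝ) := by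
  classical
  obtain ⟨m, hm, hpow⟩ := exists_ge_mul_le_two_pow (k * k + k) (N + 9)
  have : NeZero k := ⟨by omega⟩
  have : NeZero m := ⟨by omega⟩
  set K := (CycWreath.balance k m).ker
  set T := (CycWreath.gens k m).subtype (· ∈ K)
  have hT : T.card = (CycWreath.gens k m).card := by
    rw [Finset.card_subtype, Finset.filter_true_of_mem (CycWreath.gens_subset_ker k m)]
  have hdiam : WordDiamLE (connectionSet T : Set K) k :=
    (WordDiamLE.subtype (CycWreath.gens_subset_ker k m) fun _ hg =>
      CycWreath.exists_list_gens_prod_eq k m hg).connectionSet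
  have hlo := CycWreath.le_card_gens k m (by omega)
  have hlo' := card_sub_one_le_card_connectionSet T
  have hhi := CycWreath.card_gens_le k m
  have hhi' := card_connectionSet_le T
  have hcard : (Nat.card K : ℝ) = 1 / k * ((k * k * m : ℕ) : ℝ) ^ k := by
    have h := CycWreath.card_ker_balance k m
    rw [← mul_assoc] at h
    field_simp
    exact_mod_cast Nat.eq_of_mul_eq_mul_right (NeZero.pos k) h
  have hmM : m ≤ k * k * m := Nat.le_mul_of_pos_left m (by positivity)
  refine ⟨(connectionSet T).card, by omega, K, inferInstance, inferInstance, connectionSet T, rfl,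
    one_notMem_connectionSet T, fun _ => inv_mem_connectionSet, hdiam.closure_eq_top, hdiam, ?_⟩
  rw [hcard]
  exact order_bound_le k m _ hk (by omega) (by omega) (by omega) hpow
end

section
/- Fix integers k ≥ 4 and t ≥ 2, set r = (k−1), and consider the function n(d) = (k−1)(d−k+3)^{k−1} (order from the first directed construction) versus v(d) = k·⌊d/2⌋^k (Vetrík's order). Then for all integers d with 2k + 2·log₂ k − 5 ≤ d ≤ 2^k(1 − 1/k) − k² + 4k − 4 and d even and k sufficiently large, n(d) > v(d). -/
/-!
Write `d = 2m` and `c = k - 3`. In the variable `t = 1/m` the claim reads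
`log (k / (k - 1)) < log t + (k - 1) log (2 - c t)`, whose right-hand side is concave in `t`;
hence it suffices to check the two ends `m₁ ≤ m ≤ m₂` of the admissible range.
At `m₂`, Bernoulli's inequality in the form `(1 + u)^N (1 - N u) ≤ 1` reduces the claim to
`(k² - 3k + 1)² < 2^k (k - 1) / k`, a consequence of `k⁵ < 2^k (k - 1)`.
At `m₁`, the bounds `1 - 1/x ≤ log x ≤ x - 1`, `log 2 < 0.69315` and `(log₂ k)² ≤ 1.13 k`
(from `e log y ≤ y`) reduce it to a polynomial inequality in `k` and `log₂ k`.
-/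

open Real Set

lemma one_add_pow_mul_one_sub_le {u : ℝ} (hu : -1 ≤ u) (N : ℕ) :
    (1 + u) ^ N * (1 - N * u) ≤ 1 := by
  rcases le_or_gt (1 - N * u) 0 with hneg | hpos
  · exact (mul_nonpos_of_nonneg_of_nonpos (pow_nonneg (by linarith) N) hneg).trans zero_le_one
  calc (1 + u) ^ N * (1 - N * u) ≤ exp u ^ N * exp (-(N * u)) := by
        gcongr
        · linarith
        · linarith [add_one_le_exp u]
        · linarith [add_one_le_exp (-(N * u))]
    _ = 1 := by rw [← exp_nat_mul, ← exp_add, add_neg_cancel, exp_zero]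

lemma add_pow_mul_sub_le {X c : ℝ} (hX : 0 < X) (hc : -X ≤ c) (N : ℕ) :
    (X + c) ^ N * (X - N * c) ≤ X ^ (N + 1) := by
  obtain ⟨u, rfl⟩ : ∃ u, c = X * u := ⟨c / X, by field_simp⟩
  have hu : -1 ≤ u := by nlinarith
  calc (X + X * u) ^ N * (X - N * (X * u)) = X ^ (N + 1) * ((1 + u) ^ N * (1 - N * u)) := by
        rw [← mul_one_add X u, mul_pow]; ring
    _ ≤ X ^ (N + 1) := mul_le_of_le_one_right (by positivity) (one_add_pow_mul_one_sub_le hu N)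

lemma sub_add_pow_succ_lt {A B c : ℝ} {n : ℕ} (hc : 0 ≤ c) (hB : B = (n + 1) * c + 1)
    (hBA : B ^ 2 < A) : (A - B + c) ^ (n + 1) < A * (A - B) ^ n := by
  have hB1 : 1 ≤ B := by rw [hB]; nlinarith
  have hgap : 0 < A - B - (n + 1) * c := by nlinarith
  have hX : 0 < A - B := by nlinarith
  have hquad : (A - B) ^ 2 < A * (A - B - (n + 1) * c) := by nlinarith
  have hbern := add_pow_mul_sub_le hX (by linarith) (n + 1) (c := c)
  push_cast at hbern
  refine lt_of_mul_lt_mul_right (a := A - B - (n + 1) * c) ?_ hgap.le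
  calc (A - B + c) ^ (n + 1) * (A - B - (n + 1) * c) ≤ (A - B) ^ n * (A - B) ^ 2 := by
        rw [← pow_add]; exact hbern
    _ < (A - B) ^ n * (A * (A - B - (n + 1) * c)) := by gcongr
    _ = A * (A - B) ^ n * (A - B - (n + 1) * c) := by ring

lemma pow_five_lt_two_pow_mul_sub_one {k : ℕ} (hk : 20 ≤ k) : k ^ 5 < 2 ^ k * (k - 1) := by
  induction k, hk using Nat.le_induction with
  | base => norm_num
  | succ k hk ih =>
    have hk5 : (k + 1) ^ 5 ≤ 2 * k ^ 5 := by
      have h2 : 20 * k ≤ k ^ 2 := by nlinarith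
      have h3 : 20 * k ^ 2 ≤ k ^ 3 := by nlinarith
      have h4 : 20 * k ^ 3 ≤ k ^ 4 := by nlinarith
      have h5 : 20 * k ^ 4 ≤ k ^ 5 := by nlinarith
      nlinarith
    calc (k + 1) ^ 5 ≤ 2 * k ^ 5 := hk5
      _ < 2 * (2 ^ k * (k - 1)) := by omega
      _ ≤ 2 ^ (k + 1) * (k + 1 - 1) := by rw [pow_succ, mul_comm _ 2, mul_assoc]; gcongr; omega

lemma concaveOn_log_mul_sub_pow {a c : ℝ} (hc : 0 < c) (n : ℕ) :
    ConcaveOn ℝ (Ioo 0 (a / c)) (fun t => log (t * (a - c * t) ^ n)) := by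
  have hlog : ConcaveOn ℝ (Ioi 0) log := strictConcaveOn_log_Ioi.concaveOn
  have hright : ConcaveOn ℝ (Ioo 0 (a / c)) (fun t => log (a - c * t)) := by
    refine ((hlog.comp_affineMap (AffineMap.lineMap a (a - c))).subset (fun t ht => ?_)
      (convex_Ioo _ _)).congr fun t _ => ?_
    · have := (lt_div_iff₀' hc).1 ht.2
      simp only [mem_preimage, AffineMap.lineMap_apply_ring', mem_Ioi]
      linarith
    · simp only [Function.comp_apply, AffineMap.lineMap_apply_ring']
      ring_nf
  refine ((hlog.subset Ioo_subset_Ioi_self (convex_Ioo _ _)).add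
    (hright.smul (Nat.cast_nonneg n))).congr fun t ht => ?_
  have := (lt_div_iff₀' hc).1 ht.2
  simp only [Pi.add_apply, smul_eq_mul]
  rw [log_mul ht.1.ne' (pow_pos (by linarith) n).ne', log_pow]

lemma lt_mul_sub_pow_iff_log_lt {α β a c μ : ℝ} {n : ℕ} (hα : 0 < α) (hβ : 0 < β)
    (hμ : 0 < μ) (hcμ : c < a * μ) :
    α * μ ^ (n + 1) < β * (a * μ - c) ^ n ↔ log (α / β) < log (μ⁻¹ * (a - c * μ⁻¹) ^ n) := by
  have hpos : 0 < a * μ - c := by linarith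
  have hsub : μ⁻¹ * (a - c * μ⁻¹) ^ n = (a * μ - c) ^ n / μ ^ (n + 1) := by
    rw [show a - c * μ⁻¹ = (a * μ - c) / μ by field_simp, div_pow, pow_succ, ← div_div,
      inv_mul_eq_div]
  rw [hsub, log_lt_log_iff (by positivity) (by positivity), div_lt_div_iff₀ hβ (by positivity),
    mul_comm α, mul_comm β]

lemma lt_mul_sub_pow_of_endpoints {α β a c m₁ m₂ m : ℝ} {n : ℕ} (hα : 0 < α) (hβ : 0 < β)
    (hc : 0 < c) (hm₁ : 0 < m₁) (hcm₁ : c < a * m₁) (hm : m ∈ Icc m₁ m₂)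
    (h₁ : α * m₁ ^ (n + 1) < β * (a * m₁ - c) ^ n)
    (h₂ : α * m₂ ^ (n + 1) < β * (a * m₂ - c) ^ n) :
    α * m ^ (n + 1) < β * (a * m - c) ^ n := by
  have ha : 0 < a := pos_of_mul_pos_left (hc.trans hcm₁) hm₁.le
  have hm₀ : 0 < m := hm₁.trans_le hm.1
  have hm₂ : 0 < m₂ := hm₀.trans_le hm.2
  have hcm : c < a * m := hcm₁.trans_le (by gcongr; exact hm.1)
  have hcm₂ : c < a * m₂ := hcm.trans_le (by gcongr; exact hm.2)
  have mem_dom : ∀ μ, 0 < μ → c < a * μ → μ⁻¹ ∈ Ioo 0 (a / c) := fun μ hμ hcμ =>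
    ⟨inv_pos.2 hμ, by rw [lt_div_iff₀' hc, ← div_eq_mul_inv, div_lt_iff₀ hμ]; linarith⟩
  rw [lt_mul_sub_pow_iff_log_lt hα hβ hm₀ hcm]
  rw [lt_mul_sub_pow_iff_log_lt hα hβ hm₁ hcm₁] at h₁
  rw [lt_mul_sub_pow_iff_log_lt hα hβ hm₂ hcm₂] at h₂
  exact (lt_min h₂ h₁).trans_le ((concaveOn_log_mul_sub_pow hc n).min_le_of_mem_Icc
    (mem_dom _ hm₂ hcm₂) (mem_dom _ hm₁ hcm₁) ⟨inv_anti₀ hm₀ hm.2, inv_anti₀ hm₁ hm.1⟩)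

lemma sq_exp_one_mul_log_le {x : ℝ} (hx : 1 ≤ x) : (exp 1 * log x) ^ 2 ≤ 4 * x := by
  have hsqrt : exp 1 * log √x ≤ √x := by
    simpa [exp_log (sqrt_pos.2 (by linarith : (0 : ℝ) < x))] using exp_one_mul_le_exp (x := log √x)
  rw [log_sqrt (by linarith), mul_div_assoc'] at hsqrt
  have h0 : 0 ≤ exp 1 * log x := mul_nonneg (exp_pos 1).le (log_nonneg hx)
  calc (exp 1 * log x) ^ 2 ≤ (2 * √x) ^ 2 :=
        pow_le_pow_left₀ h0 (by linarith [(div_le_iff₀ two_pos).1 hsqrt]) 2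
    _ = 4 * x := by rw [mul_pow, sq_sqrt (by linarith)]; norm_num

lemma lower_endpoint_rational_bound {K L : ℝ} (hK : 20 ≤ K) (hL : 4 ≤ L)
    (hLK : 3.549 * L ^ 2 ≤ 4 * K) :
    1 / (K - 1) + 0.69315 * L + (L - 5 / 2) / K < (K - 1) * (L + 1 / 2) / (K + 2 * L - 2) := by
  have hcube : 3.549 * L ^ 3 ≤ 4 * (L * K) := by nlinarith
  have hpoly : (K + 2 * L - 2) * (K + 0.69315 * L * (K * (K - 1)) + (L - 5 / 2) * (K - 1))
      < K * (K - 1) ^ 2 * (L + 1 / 2) := by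
    nlinarith [mul_nonneg (sub_nonneg.2 hL) (sub_nonneg.2 hK)]
  have hK1 : K - 1 ≠ 0 := by linarith
  have e : 1 / (K - 1) + 0.69315 * L + (L - 5 / 2) / K
      = (K + 0.69315 * L * (K * (K - 1)) + (L - 5 / 2) * (K - 1)) / ((K - 1) * K) := by
    field_simp
  rw [e, div_lt_div_iff₀ (by nlinarith) (by linarith)]
  nlinarith

lemma log_lower_endpoint_lt {K L : ℝ} (hK : 20 ≤ K) (hL : 4 ≤ L) (hLK : 3.549 * L ^ 2 ≤ 4 * K)
    (hlogK : log K ≤ 0.69315 * L) :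
    log K + K * log (K + L - 5 / 2) < log (K - 1) + (K - 1) * log (K + 2 * L - 2) := by
  have hx : 0 < K + L - 5 / 2 := by linarith
  have hy : 0 < K + 2 * L - 2 := by linarith
  have hx_le : log (K + L - 5 / 2) ≤ log K + (L - 5 / 2) / K := by
    have h := log_le_sub_one_of_pos (div_pos hx (by linarith : 0 < K))
    rw [log_div hx.ne' (by linarith)] at h
    have e : (K + L - 5 / 2) / K - 1 = (L - 5 / 2) / K := by field_simp; ring
    linarith
  have hyx : (L + 1 / 2) / (K + 2 * L - 2) ≤ log (K + 2 * L - 2) - log (K + L - 5 / 2) := by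
    have h := one_sub_inv_le_log_of_pos (div_pos hy hx)
    rw [log_div hy.ne' hx.ne', inv_div] at h
    have e : 1 - (K + L - 5 / 2) / (K + 2 * L - 2) = (L + 1 / 2) / (K + 2 * L - 2) := by
      rw [eq_div_iff hy.ne', sub_mul, div_mul_cancel₀ _ hy.ne']; ring
    linarith
  have hK1 : log K - log (K - 1) ≤ 1 / (K - 1) := by
    have h := log_le_sub_one_of_pos (div_pos (by linarith : 0 < K) (by linarith : 0 < K - 1))
    rw [log_div (by linarith) (by linarith)] at h
    have e : K / (K - 1) - 1 = 1 / (K - 1) := by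
      field_simp [(by linarith : K - 1 ≠ 0)]; ring
    linarith
  calc log K + K * log (K + L - 5 / 2)
      = (log K - log (K - 1)) + log (K + L - 5 / 2) + log (K - 1)
        + (K - 1) * log (K + L - 5 / 2) := by ring
    _ ≤ 1 / (K - 1) + 0.69315 * L + (L - 5 / 2) / K + log (K - 1)
        + (K - 1) * log (K + L - 5 / 2) := by linarith
    _ < (K - 1) * (L + 1 / 2) / (K + 2 * L - 2) + log (K - 1)
        + (K - 1) * log (K + L - 5 / 2) := by linarith [lower_endpoint_rational_bound hK hL hLK]
    _ ≤ (K - 1) * (log (K + 2 * L - 2) - log (K + L - 5 / 2)) + log (K - 1)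
        + (K - 1) * log (K + L - 5 / 2) := by
          rw [mul_div_assoc]; gcongr; linarith
    _ = log (K - 1) + (K - 1) * log (K + 2 * L - 2) := by ring

lemma lt_at_lower_endpoint {k : ℕ} (hk : 20 ≤ k) {m₁ : ℝ}
    (hm₁ : 2 * m₁ = 2 * k + 2 * logb 2 k - 5) :
    k * m₁ ^ k < (k - 1) * (2 * m₁ - (k - 3)) ^ (k - 1) := by
  have hK : (20 : ℝ) ≤ k := by exact_mod_cast hk
  set K : ℝ := (k : ℝ)
  set L := logb 2 K with hLdef
  have hlog2 : 0 < log 2 := log_pos one_lt_two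
  have hlogK : log K = L * log 2 := by rw [hLdef, logb, div_mul_cancel₀ _ hlog2.ne']
  have hL : 4 ≤ L := by
    rw [hLdef, le_logb_iff_rpow_le one_lt_two (by linarith)]
    norm_num
    linarith
  have hLK : 3.549 * L ^ 2 ≤ 4 * K := by
    have h := sq_exp_one_mul_log_le (by linarith : 1 ≤ K)
    have he : 1.884 ≤ exp 1 * log 2 := by nlinarith [exp_one_gt_d9, log_two_gt_d9]
    rw [hlogK] at h
    calc 3.549 * L ^ 2 ≤ (1.884 * L) ^ 2 := by nlinarith
      _ ≤ (exp 1 * (L * log 2)) ^ 2 := pow_le_pow_left₀ (by positivity) (by nlinarith) 2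
      _ ≤ 4 * K := h
  have hlogK' : log K ≤ 0.69315 * L := by
    rw [hlogK]; nlinarith [log_two_lt_d9]
  have hk1 : ((k - 1 : ℕ) : ℝ) = K - 1 := by push_cast [Nat.cast_sub (by omega : 1 ≤ k)]; rfl
  have hx : m₁ = K + L - 5 / 2 := by linarith
  have hy : 2 * m₁ - (K - 3) = K + 2 * L - 2 := by linarith
  have hx0 : 0 < K + L - 5 / 2 := by linarith
  have hy0 : 0 < K + 2 * L - 2 := by linarith
  rw [hy, hx, ← log_lt_log_iff (mul_pos (by linarith) (pow_pos hx0 _))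
    (mul_pos (by linarith) (pow_pos hy0 _)), log_mul (by linarith) (pow_pos hx0 _).ne',
    log_mul (by linarith) (pow_pos hy0 _).ne', log_pow, log_pow, hk1]
  exact log_lower_endpoint_lt hK hL hLK hlogK'

lemma lt_at_upper_endpoint {k : ℕ} (hk : 20 ≤ k) {m₂ : ℝ}
    (hm₂ : 2 * m₂ = 2 ^ k * (1 - 1 / (k : ℝ)) - (k : ℝ) ^ 2 + 4 * k - 4) :
    k * m₂ ^ k < (k - 1) * (2 * m₂ - (k - 3)) ^ (k - 1) := by
  have h5 : (k : ℝ) ^ 5 < 2 ^ k * (k - 1) := by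
    have := pow_five_lt_two_pow_mul_sub_one hk
    rw [← Nat.cast_lt (α := ℝ)] at this
    push_cast [Nat.cast_sub (by omega : 1 ≤ k)] at this
    exact this
  have hK : (20 : ℝ) ≤ k := by exact_mod_cast hk
  obtain ⟨n, rfl⟩ : ∃ n, k = n + 1 := ⟨k - 1, by omega⟩
  rw [Nat.add_sub_cancel]
  set K : ℝ := ((n + 1 : ℕ) : ℝ) with hKdef
  set A : ℝ := 2 ^ (n + 1) * (K - 1) / K with hA
  set B : ℝ := K * (K - 3) + 1 with hB
  have hKn : (n : ℝ) + 1 = K := by rw [hKdef]; push_cast; ring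
  have hKA : K * A = 2 ^ (n + 1) * (K - 1) := by rw [hA]; field_simp
  have hBA : B ^ 2 < A := by
    have : B ^ 2 ≤ K ^ 4 := by nlinarith
    nlinarith
  have h2m₂ : 2 * m₂ = A - B + (K - 3) := by rw [hm₂, hA, hB]; field_simp; ring
  have key := sub_add_pow_succ_lt (c := K - 3) (by linarith) (by rw [hKn]) hBA
  rw [← h2m₂, show A - B = 2 * m₂ - (K - 3) by linarith, mul_pow] at key
  refine lt_of_mul_lt_mul_left (a := 2 ^ (n + 1)) ?_ (by positivity)
  calc 2 ^ (n + 1) * (K * m₂ ^ (n + 1)) = K * (2 ^ (n + 1) * m₂ ^ (n + 1)) := by ring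
    _ < K * (A * (2 * m₂ - (K - 3)) ^ n) := by gcongr
    _ = 2 ^ (n + 1) * ((K - 1) * (2 * m₂ - (K - 3)) ^ n) := by rw [← mul_assoc, hKA]; ring

lemma vetrik_lt_of_bounds {k : ℕ} (hk : 20 ≤ k) {m : ℝ}
    (hlo : 2 * (k : ℝ) + 2 * logb 2 k - 5 ≤ 2 * m)
    (hhi : 2 * m ≤ 2 ^ k * (1 - 1 / (k : ℝ)) - (k : ℝ) ^ 2 + 4 * k - 4) :
    k * m ^ k < (k - 1) * (2 * m - (k - 3)) ^ (k - 1) := by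
  have hK : (20 : ℝ) ≤ k := by exact_mod_cast hk
  have hL : 0 ≤ logb 2 (k : ℝ) := logb_nonneg one_lt_two (by linarith)
  have h₁ := lt_at_lower_endpoint hk (m₁ := (2 * k + 2 * logb 2 k - 5) / 2) (by ring)
  have h₂ := lt_at_upper_endpoint hk
    (m₂ := (2 ^ k * (1 - 1 / (k : ℝ)) - (k : ℝ) ^ 2 + 4 * k - 4) / 2) (by ring)
  obtain ⟨n, rfl⟩ : ∃ n, k = n + 1 := ⟨k - 1, by omega⟩
  rw [Nat.add_sub_cancel] at h₁ h₂ ⊢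
  exact lt_mul_sub_pow_of_endpoints (by linarith) (by linarith) (by linarith) (by linarith)
    (by linarith) ⟨by linarith, by linarith⟩ h₁ h₂

/-- Comparison of the first directed construction with Vetrík's: for `k` sufficiently
large (here `k ≥ 20`) and every even integer `d` with
`2k + 2log₂ k − 5 ≤ d ≤ 2^k(1 − 1/k) − k² + 4k − 4`, one has
`(k−1)(d−k+3)^{k−1} > k⌊d/2⌋^k`. -/
theorem first_construction_beats_vetrik (k d : ℕ) (hk : 20 ≤ k) (hd_even : Even d)
    (hd_lo : 2 * (k : ℝ) + 2 * Real.logb 2 (k : ℝ) - 5 ≤ (d : ℝ))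
    (hd_hi : (d : ℝ) ≤ 2 ^ k * (1 - 1 / (k : ℝ)) - (k : ℝ) ^ 2 + 4 * k - 4) :
    k * (d / 2) ^ k < (k - 1) * (d + 3 - k) ^ (k - 1) := by
  obtain ⟨m, rfl⟩ := hd_even
  push_cast at hd_lo hd_hi
  have hreal := vetrik_lt_of_bounds hk (m := m) (by linarith) (by linarith)
  have hkd : k ≤ m + m + 3 := by
    have hL := logb_nonneg one_lt_two (Nat.one_le_cast.2 (by omega : 1 ≤ k) : (1 : ℝ) ≤ k)
    exact_mod_cast (by linarith : (k : ℝ) ≤ m + m + 3)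
  rw [show (m + m) / 2 = m by omega, ← Nat.cast_lt (α := ℝ)]
  push_cast [Nat.cast_sub hkd, Nat.cast_sub (by omega : 1 ≤ k)]
  rwa [show (m : ℝ) + m + 3 - k = 2 * m - (k - 3) by ring]
end

section
/- Let k ≥ 3 and let ℓ be an integer with log₂(k²ℓ) ≤ (3/4)ℓ. Set θ = log₂(k²ℓ)/(kℓ). Then θ ≤ 3/(4k) ≤ 1/4, and setting n₀ = (kℓ − log₂(k²ℓ))·2^{kℓ − log₂(k²ℓ)} and d⁺ = (1 + 2/k − 2θ/k)·2^ℓ − 1, one has k·n₀ ≥ ((k/(k+2))·(d⁺+1))^k. -/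
open Real

lemma taylor_bound (x : ℝ) (hx0 : 0 ≤ x) (hx1 : x ≤ 1) :
    ∀ n : ℕ, (1 - x) ^ n ≤ 1 - n * x + n * (n - 1) / 2 * x ^ 2 := by
  intro n
  induction n with
  | zero => simp
  | succ n ih =>
    have h1 : (0:ℝ) ≤ 1 - x := by linarith
    have hn : (0:ℝ) ≤ (n:ℝ) * ((n:ℝ) - 1) := by
      rcases n with _ | m
      · simp
      · have : (1:ℝ) ≤ ((m+1 : ℕ) : ℝ) := by exact_mod_cast Nat.one_le_iff_ne_zero.mpr (by simp)
        nlinarith [Nat.cast_nonneg (α := ℝ) (m+1)]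
    have hstep : (1 - x) ^ (n + 1) ≤ (1 - (n:ℝ) * x + (n:ℝ) * ((n:ℝ) - 1) / 2 * x ^ 2) * (1 - x) := by
      rw [pow_succ]
      exact mul_le_mul_of_nonneg_right ih h1
    push_cast
    nlinarith [mul_nonneg (mul_nonneg hn hx0) (mul_nonneg hx0 hx0)]

set_option maxHeartbeats 1000000 in
/-- The central estimate in Corollary 4: with `θ = log₂(k²ℓ)/(kℓ)`,
`n₀ = (kℓ − log₂(k²ℓ))·2^{kℓ − log₂(k²ℓ)}` and `d⁺ = (1 + 2/k − 2θ/k)·2^ℓ − 1`,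
one has `θ ≤ 3/(4k) ≤ 1/4` and `k·n₀ ≥ ((k/(k+2))(d⁺+1))^k`. -/
theorem central_estimate (k ℓ : ℕ) (hk : 3 ≤ k) (hl : 2 ≤ ℓ)
    (hlog : Real.logb 2 ((k : ℝ) ^ 2 * ℓ) ≤ (3 / 4) * ℓ)
    (θ n₀ dplus : ℝ)
    (hθ : θ = Real.logb 2 ((k : ℝ) ^ 2 * ℓ) / ((k : ℝ) * ℓ))
    (hn₀ : n₀ = ((k : ℝ) * ℓ - Real.logb 2 ((k : ℝ) ^ 2 * ℓ))
        * 2 ^ ((k : ℝ) * ℓ - Real.logb 2 ((k : ℝ) ^ 2 * ℓ)))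
    (hd : dplus = (1 + 2 / (k : ℝ) - 2 * θ / (k : ℝ)) * 2 ^ ℓ - 1) :
    θ ≤ 3 / (4 * (k : ℝ)) ∧ 3 / (4 * (k : ℝ)) ≤ 1 / 4 ∧
    (((k : ℝ) / ((k : ℝ) + 2)) * (dplus + 1)) ^ k ≤ (k : ℝ) * n₀ := by
  have hk3 : (3:ℝ) ≤ (k:ℝ) := by exact_mod_cast hk
  have hkpos : (0:ℝ) < (k:ℝ) := by linarith
  have hl2 : (2:ℝ) ≤ (ℓ:ℝ) := by exact_mod_cast hl
  have hlpos : (0:ℝ) < (ℓ:ℝ) := by linarith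
  have hklpos : (0:ℝ) < (k:ℝ) * ℓ := mul_pos hkpos hlpos
  have hk2l : (1:ℝ) < (k:ℝ) ^ 2 * ℓ := by nlinarith
  have hLpos : 0 < Real.logb 2 ((k:ℝ) ^ 2 * ℓ) := Real.logb_pos one_lt_two hk2l
  have hθpos : 0 < θ := by rw [hθ]; exact div_pos hLpos hklpos
  have h1 : θ ≤ 3 / (4 * (k:ℝ)) := by
    rw [hθ, div_le_div_iff₀ hklpos (by positivity)]
    nlinarith [hlog]
  refine ⟨h1, ?_, ?_⟩
  · rw [div_le_div_iff₀ (by positivity) (by norm_num)]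
    linarith
  -- key identities
  have h2L : (2:ℝ) ^ Real.logb 2 ((k:ℝ) ^ 2 * ℓ) = (k:ℝ) ^ 2 * ℓ :=
    Real.rpow_logb (by norm_num) (by norm_num) (by positivity)
  have hpowkl : (2:ℝ) ^ ((k:ℝ) * ℓ) = ((2:ℝ) ^ ℓ) ^ k := by
    rw [mul_comm, Real.rpow_mul (by norm_num), Real.rpow_natCast, Real.rpow_natCast]
  have hpow : (2:ℝ) ^ ((k:ℝ) * ℓ - Real.logb 2 ((k:ℝ) ^ 2 * ℓ))
      = ((2:ℝ) ^ ℓ) ^ k / ((k:ℝ) ^ 2 * ℓ) := by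
    rw [Real.rpow_sub (by norm_num), h2L, hpowkl]
  have hLθ : Real.logb 2 ((k:ℝ) ^ 2 * ℓ) = θ * ((k:ℝ) * ℓ) := by
    rw [hθ]; field_simp
  have hkey : (k:ℝ) * n₀ = (1 - θ) * ((2:ℝ) ^ ℓ) ^ k := by
    rw [hn₀, hpow, hLθ]
    field_simp
  rw [hkey]
  -- rewrite the left-hand side
  have hdp : dplus + 1 = (((k:ℝ) + 2 - 2 * θ) / (k:ℝ)) * 2 ^ ℓ := by
    rw [hd]; field_simp; ring
  have hlhs : ((k:ℝ) / ((k:ℝ) + 2)) * (dplus + 1)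
      = (((k:ℝ) + 2 - 2 * θ) / ((k:ℝ) + 2)) * 2 ^ ℓ := by
    rw [hdp]; field_simp
  rw [hlhs, mul_pow]
  have hpow2 : (0:ℝ) ≤ ((2:ℝ) ^ ℓ) ^ k := by positivity
  have hmain : (((k:ℝ) + 2 - 2 * θ) / ((k:ℝ) + 2)) ^ k ≤ 1 - θ := by
    obtain ⟨x, hxdef⟩ : ∃ x : ℝ, x = 2 * θ / ((k:ℝ) + 2) := ⟨_, rfl⟩
    have hk2pos : (0:ℝ) < (k:ℝ) + 2 := by linarith
    have hxk : x * ((k:ℝ) + 2) = 2 * θ := by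
      rw [hxdef]; field_simp
    have hx0 : 0 ≤ x := by rw [hxdef]; positivity
    have hx1 : x ≤ 1 := by
      rw [hxdef, div_le_one hk2pos]
      have : θ ≤ 1 / 4 := by
        calc θ ≤ 3 / (4 * (k:ℝ)) := h1
        _ ≤ 1 / 4 := by rw [div_le_div_iff₀ (by positivity) (by norm_num)]; linarith
      linarith
    have heq : ((k:ℝ) + 2 - 2 * θ) / ((k:ℝ) + 2) = 1 - x := by
      rw [hxdef]; field_simp
    rw [heq]
    have htb := taylor_bound x hx0 hx1 k
    have h4 : 4 * (k:ℝ) * θ ≤ 3 := by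
      have h1' := (le_div_iff₀ (by positivity : (0:ℝ) < 4 * (k:ℝ))).mp h1
      linarith
    have h5 : (k:ℝ) * x * ((k:ℝ) + 2) ≤ 3 / 2 := by nlinarith [hxk, h4]
    have h6 : ((k:ℝ) - 1) * ((k:ℝ) * x * ((k:ℝ) + 2)) ≤ ((k:ℝ) - 1) * (3 / 2) :=
      mul_le_mul_of_nonneg_left h5 (by linarith)
    have hxb : (k:ℝ) * ((k:ℝ) - 1) * x ≤ (k:ℝ) - 2 := by
      nlinarith [h6, sq_nonneg ((k:ℝ) - 3)]
    have hprod : 0 ≤ x * ((k:ℝ) - 2 - (k:ℝ) * ((k:ℝ) - 1) * x) :=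
      mul_nonneg hx0 (by linarith)
    have hfin : 1 - (k:ℝ) * x + (k:ℝ) * ((k:ℝ) - 1) / 2 * x ^ 2 ≤ 1 - θ := by
      nlinarith [hprod, hxk]
    linarith
  exact mul_le_mul_of_nonneg_right hmain hpow2
end
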